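/- arXiv:1911.06563 — 2 statements merged into one kernel-verified Lean document; each statement's English description precedes it below -/
import Mathlib

section
/- Let n ≥ 1, let c ∈ ℝ and let k ∈ ℕ. There exists a constant C > 0 such that for all ξ ∈ ℝⁿ with ξ ≠ 0, the k-th iterated derivative of the function ξ ↦ ‖ξ‖^c satisfies ‖D^k(‖·‖^c)(ξ)‖ ≤ C ‖ξ‖^{c−k} (norm of the k-th iterated Fréchet derivative, computed on ℝⁿ \ {0} where the function is smooth). -/
/-!
A function `f` with `f (t • x) = t ^ c • f x` for `t > 0` has `k`-th derivative at `t • x` equal to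
`t ^ (c - k)` times the one at `x`: differentiate `f ∘ (t • ·) = t ^ c • f` `k` times, and each of
the `k` arguments of the multilinear map contributes a factor `t`. Writing `ξ = ‖ξ‖ • u` with `u` on
the unit sphere, the estimate follows from the boundedness of the continuous `D^k f` on the compact
sphere. The function `‖·‖ ^ c` is such an `f`, smooth away from the origin.
-/

def IsPosHomogeneous {E F : Type*} [AddCommGroup E] [Module ℝ E] [AddCommGroup F] [Module ℝ F]
    (f : E → F) (c : ℝ) : Prop :=
  ∀ t : ℝ, 0 < t → ∀ x, f (t • x) = t ^ c • f x

theorem contDiffOn_norm_rpow {E : Type*} [NormedAddCommGroup E] [InnerProductSpace ℝ E]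
    {n : WithTop ℕ∞} (c : ℝ) : ContDiffOn ℝ n (fun x : E => ‖x‖ ^ c) {0}ᶜ := fun x hx =>
  ((Real.contDiffAt_rpow_const_of_ne (norm_ne_zero_iff.2 hx)).comp x
    (contDiffAt_norm ℝ hx)).contDiffWithinAt

section

variable {E F : Type*} [NormedAddCommGroup E] [NormedSpace ℝ E]
  [NormedAddCommGroup F] [NormedSpace ℝ F]

theorem isPosHomogeneous_norm_rpow (c : ℝ) : IsPosHomogeneous (fun x : E => ‖x‖ ^ c) c := by
  intro t ht x
  show ‖t • x‖ ^ c = t ^ c * ‖x‖ ^ c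
  rw [norm_smul, Real.norm_of_nonneg ht.le, Real.mul_rpow ht.le (norm_nonneg x)]

theorem ContinuousMultilinearMap.compContinuousLinearMap_const_smul_id {k : ℕ}
    (M : ContinuousMultilinearMap ℝ (fun _ : Fin k => E) F) (t : ℝ) :
    (M.compContinuousLinearMap fun _ => t • ContinuousLinearMap.id ℝ E) = t ^ k • M := by
  ext m
  simp [M.map_smul_univ (fun _ => t) m]

theorem IsPosHomogeneous.iteratedFDerivWithin_compl_zero_smul {f : E → F} {c : ℝ}
    (hf : IsPosHomogeneous f c) (k : ℕ) {t : ℝ} (ht : 0 < t) {x : E} (hx : x ≠ 0) :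
    iteratedFDerivWithin ℝ k f {0}ᶜ (t • x) =
      t ^ (c - k) • iteratedFDerivWithin ℝ k f {0}ᶜ x := by
  have hs : UniqueDiffOn ℝ ({0}ᶜ : Set E) := isOpen_compl_singleton.uniqueDiffOn
  have htc : 0 < t ^ c := Real.rpow_pos_of_pos ht c
  let g : E ≃L[ℝ] E := ContinuousLinearEquiv.smulLeft (Units.mk0 t ht.ne')
  let h : F ≃L[ℝ] F := ContinuousLinearEquiv.smulLeft (Units.mk0 (t ^ c) htc.ne')
  have hfg : f ∘ g = h ∘ f := by
    funext y
    simp [g, h, hf t ht]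
  have hpre : g ⁻¹' ({0}ᶜ : Set E) = {0}ᶜ := by
    ext y
    simp [g, ht.ne']
  have hgx : g x = t • x := by simp [g]
  have hg : (g : E →L[ℝ] E) = t • ContinuousLinearMap.id ℝ E := by ext; simp [g]
  have hh : (h : F →L[ℝ] F).compContinuousMultilinearMap (iteratedFDerivWithin ℝ k f {0}ᶜ x) =
      t ^ c • iteratedFDerivWithin ℝ k f {0}ᶜ x := by ext; simp [h]
  -- both sides are `D^k (f ∘ g) x`, by the chain rule on the right and on the left
  have hderiv : t ^ c • iteratedFDerivWithin ℝ k f {0}ᶜ x =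
      t ^ k • iteratedFDerivWithin ℝ k f {0}ᶜ (t • x) := by
    have hright :=
      g.iteratedFDerivWithin_comp_right f hs (x := x) (by simpa [g, ht.ne'] using hx) k
    rwa [hfg, hpre, h.iteratedFDerivWithin_comp_left f hs hx k, hh, hgx, hg,
      ContinuousMultilinearMap.compContinuousLinearMap_const_smul_id] at hright
  rw [Real.rpow_sub ht, Real.rpow_natCast, div_eq_inv_mul, mul_smul, hderiv, smul_smul,
    inv_mul_cancel₀ (pow_ne_zero _ ht.ne'), one_smul]

theorem IsPosHomogeneous.exists_norm_iteratedFDerivWithin_le [ProperSpace E] {f : E → F} {c : ℝ}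
    (hf : IsPosHomogeneous f c) {k : ℕ} (hsmooth : ContDiffOn ℝ k f {0}ᶜ) :
    ∃ C, 0 < C ∧ ∀ x ≠ 0, ‖iteratedFDerivWithin ℝ k f {0}ᶜ x‖ ≤ C * ‖x‖ ^ (c - k) := by
  have hsphere : Metric.sphere (0 : E) 1 ⊆ {0}ᶜ := fun u hu =>
    ne_zero_of_mem_unit_sphere (⟨u, hu⟩ : Metric.sphere (0 : E) 1)
  obtain ⟨C, hC⟩ := (isCompact_sphere (0 : E) 1).exists_bound_of_continuousOn
    ((hsmooth.continuousOn_iteratedFDerivWithin le_rfl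
      isOpen_compl_singleton.uniqueDiffOn).mono hsphere)
  refine ⟨max C 1, one_pos.trans_le (le_max_right _ _), fun x hx => ?_⟩
  have hnorm : 0 < ‖x‖ := norm_pos_iff.2 hx
  set u := ‖x‖⁻¹ • x
  have hu : u ∈ Metric.sphere (0 : E) 1 := by simp [u, norm_smul, inv_mul_cancel₀ hnorm.ne']
  have hxu : x = ‖x‖ • u := by simp [u, smul_smul, mul_inv_cancel₀ hnorm.ne']
  calc ‖iteratedFDerivWithin ℝ k f {0}ᶜ x‖
      = ‖x‖ ^ (c - k) * ‖iteratedFDerivWithin ℝ k f {0}ᶜ u‖ := by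
        rw [hxu, hf.iteratedFDerivWithin_compl_zero_smul k hnorm (hsphere hu), norm_smul,
          Real.norm_of_nonneg (by positivity), ← hxu]
    _ ≤ ‖x‖ ^ (c - k) * max C 1 := by gcongr; exact (hC u hu).trans (le_max_left _ _)
    _ = max C 1 * ‖x‖ ^ (c - k) := mul_comm _ _

end

theorem stmt_8_general (n : ℕ) (c : ℝ) (k : ℕ) :
    ∃ C : ℝ, 0 < C ∧
      ∀ ξ : EuclideanSpace ℝ (Fin n), ξ ≠ 0 →
        ‖iteratedFDerivWithin ℝ k (fun ξ : EuclideanSpace ℝ (Fin n) => ‖ξ‖ ^ c)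
            {ξ : EuclideanSpace ℝ (Fin n) | ξ ≠ 0} ξ‖ ≤ C * ‖ξ‖ ^ (c - k) :=
  (isPosHomogeneous_norm_rpow c).exists_norm_iteratedFDerivWithin_le (contDiffOn_norm_rpow c)

/-- derivative bounds for `ξ ↦ ‖ξ‖^c` on `ℝⁿ \ {0}`,
estimate (2.1.11) of the paper with `c = 2pσ`. -/
theorem stmt_8 (n : ℕ) (hn : 1 ≤ n) (c : ℝ) (k : ℕ) :
    ∃ C : ℝ, 0 < C ∧
      ∀ ξ : EuclideanSpace ℝ (Fin n), ξ ≠ 0 →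
        ‖iteratedFDerivWithin ℝ k (fun ξ : EuclideanSpace ℝ (Fin n) => ‖ξ‖ ^ c)
            {ξ : EuclideanSpace ℝ (Fin n) | ξ ≠ 0} ξ‖ ≤ C * ‖ξ‖ ^ (c - k) :=
  stmt_8_general n c k
end

section
/- Let σ > 1, n ≥ 1 and k ∈ ℕ. There exists a constant C > 0 such that for all ξ ∈ ℝⁿ with ‖ξ‖^(2σ) ≥ 5, the k-th iterated derivative of φ (computed within the open set U = {ξ : ‖ξ‖^(2σ) > 4}, on which φ is smooth) satisfies ‖D^k φ(ξ)‖ ≤ C ‖ξ‖^{−2σ−k}. -/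
open MeasureTheory

noncomputable section

variable {n : ℕ}

/-- The function `φ(ξ) = −1 + ∫₀¹ (1 − 4s‖ξ‖^{−2σ})^{−1/2} ds`. -/
def phi (σ : ℝ) (ξ : EuclideanSpace ℝ (Fin n)) : ℝ :=
  -1 + ∫ s in (0:ℝ)..1, (1 - 4 * s * ‖ξ‖ ^ (-(2 * σ))) ^ (-(1/2) : ℝ)

open Set
open scoped ContDiff Nat

/-! On `U`, `φ = h ∘ u` with `u ξ = ‖ξ‖^(-2σ)` and `h u = -1 + 2 / (1 + √(1 - 4u))`, which is smooth
for `u < 1/4` and satisfies `|h u| ≤ 4u`. Since `u` is homogeneous of degree `-2σ`, a bound for its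
derivatives on the unit sphere gives `‖D^i u(ξ)‖ ≲ ‖ξ‖^(-2σ-i)`. Write `φ = h(ε ·) ∘ (u / ε)` with
`ε = u ξ`: the inner derivatives at `ξ` are then `≲ (C / ‖ξ‖)^i` and the outer ones `≲ ε`, so
Faà di Bruno gives `‖D^k φ(ξ)‖ ≲ ε ‖ξ‖^(-k)`. -/

section IteratedFDeriv

variable {𝕜 E F G : Type*} [NontriviallyNormedField 𝕜]
  [NormedAddCommGroup E] [NormedSpace 𝕜 E] [NormedAddCommGroup F] [NormedSpace 𝕜 F]
  [NormedAddCommGroup G] [NormedSpace 𝕜 G]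

theorem iteratedFDerivWithin_comp_smul (f : E → F) {s : Set E} (hs : UniqueDiffOn 𝕜 s)
    {c : 𝕜} (hc : c ≠ 0) {x : E} (hx : c • x ∈ s) (i : ℕ) :
    iteratedFDerivWithin 𝕜 i (fun y => f (c • y)) ((c • ·) ⁻¹' s) x =
      c ^ i • iteratedFDerivWithin 𝕜 i f s (c • x) := by
  have h := (ContinuousLinearEquiv.smulLeft (R₁ := 𝕜) (M₁ := E) (Units.mk0 c hc))
    |>.iteratedFDerivWithin_comp_right f hs hx i
  have hsmul : ⇑(ContinuousLinearEquiv.smulLeft (R₁ := 𝕜) (M₁ := E) (Units.mk0 c hc)) = (c • ·) :=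
    rfl
  rw [hsmul, Function.comp_def] at h
  ext m
  simp [h, ContinuousMultilinearMap.map_smul_univ]

theorem norm_iteratedFDerivWithin_comp_le_of_smul {g : F → G} {f : E → F} {k : ℕ} {N : WithTop ℕ∞}
    {s : Set E} {t : Set F} {x : E} (hg : ContDiffOn 𝕜 N g t) (hf : ContDiffOn 𝕜 N f s)
    (hk : k ≤ N) (ht : UniqueDiffOn 𝕜 t) (hs : UniqueDiffOn 𝕜 s) (hst : MapsTo f s t)
    (hx : x ∈ s) {c : 𝕜} (hc : c ≠ 0) {C D : ℝ}
    (hC : ∀ i ≤ k, ‖c‖ ^ i * ‖iteratedFDerivWithin 𝕜 i g t (f x)‖ ≤ C)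
    (hD : ∀ i, 1 ≤ i → i ≤ k → ‖iteratedFDerivWithin 𝕜 i f s x‖ ≤ ‖c‖ * D ^ i) :
    ‖iteratedFDerivWithin 𝕜 k (g ∘ f) s x‖ ≤ k ! * C * D ^ k := by
  have hgf : g ∘ f = (fun y => g (c • y)) ∘ (c⁻¹ • f) := by
    funext z; simp [smul_inv_smul₀ hc]
  have hmaps : MapsTo (c⁻¹ • f) s ((c • ·) ⁻¹' t) := fun z hz => by
    simpa [smul_inv_smul₀ hc] using hst hz
  rw [hgf]
  refine norm_iteratedFDerivWithin_comp_le (g := fun y => g (c • y)) (f := c⁻¹ • f)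
    (t := (c • ·) ⁻¹' t) (hg.comp (contDiff_const_smul c).contDiffOn fun y hy => hy)
    (hf.const_smul c⁻¹) hk
    ((ContinuousLinearEquiv.smulLeft (R₁ := 𝕜) (Units.mk0 c hc)).uniqueDiffOn_preimage_iff.2 ht)
    hs hmaps hx (fun i hi => ?_) (fun i hi hik => ?_)
  · rw [iteratedFDerivWithin_comp_smul g ht hc (hmaps hx), norm_smul, norm_pow]
    simpa [smul_inv_smul₀ hc] using hC i hi
  · have hfi : ContDiffWithinAt 𝕜 i f s x :=
      (hf.contDiffWithinAt hx).of_le ((Nat.cast_le.2 hik).trans hk)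
    rw [iteratedFDerivWithin_const_smul_apply hfi hs hx, norm_smul, norm_inv,
      inv_mul_le_iff₀ (norm_pos_iff.2 hc)]
    exact hD i hi hik

theorem exists_bound_iteratedFDerivWithin_of_isCompact {f : E → F} {s K : Set E} {k : ℕ}
    (hf : ContDiffOn 𝕜 k f s) (hs : UniqueDiffOn 𝕜 s) (hK : IsCompact K) (hKs : K ⊆ s) :
    ∃ C, ∀ i ≤ k, ∀ x ∈ K, ‖iteratedFDerivWithin 𝕜 i f s x‖ ≤ C := by
  obtain ⟨C, hC⟩ := hK.exists_bound_of_continuousOn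
    (f := fun x => ∑ i ∈ Finset.range (k + 1), ‖iteratedFDerivWithin 𝕜 i f s x‖)
    (continuousOn_finsetSum _ fun i hi =>
      ((hf.continuousOn_iteratedFDerivWithin
        (Nat.cast_le.2 (Nat.lt_succ_iff.1 (Finset.mem_range.1 hi))) hs).mono hKs).norm)
  refine ⟨C, fun i hi x hx => ?_⟩
  calc ‖iteratedFDerivWithin 𝕜 i f s x‖
      ≤ ∑ j ∈ Finset.range (k + 1), ‖iteratedFDerivWithin 𝕜 j f s x‖ :=
        Finset.single_le_sum (f := fun j => ‖iteratedFDerivWithin 𝕜 j f s x‖)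
          (fun j _ => norm_nonneg _) (Finset.mem_range.2 (Nat.lt_succ_of_le hi))
    _ ≤ C := (Real.le_norm_self _).trans (hC x hx)

end IteratedFDeriv

section Homogeneous

variable {E F : Type*} [NormedAddCommGroup E] [NormedSpace ℝ E] [FiniteDimensional ℝ E]
  [NormedAddCommGroup F] [NormedSpace ℝ F]

theorem exists_norm_iteratedFDeriv_le_of_homogeneous {f : E → F} {a : ℝ} {k : ℕ}
    (hf : ContDiffOn ℝ k f {0}ᶜ) (hhom : ∀ c : ℝ, 0 < c → ∀ x ≠ 0, f (c • x) = c ^ a • f x) :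
    ∃ C, ∀ i ≤ k, ∀ x ≠ (0 : E), ‖iteratedFDeriv ℝ i f x‖ ≤ C * ‖x‖ ^ (a - i) := by
  have hopen : IsOpen ({0}ᶜ : Set E) := isOpen_compl_singleton
  obtain ⟨C, hC⟩ := exists_bound_iteratedFDerivWithin_of_isCompact hf hopen.uniqueDiffOn
    (isCompact_sphere 0 1) fun y hy => ne_zero_of_mem_unit_sphere ⟨y, hy⟩
  refine ⟨C, fun i hi x hx => ?_⟩
  set R := ‖x‖
  have hR : 0 < R := norm_pos_iff.2 hx
  set η := R⁻¹ • x
  have hη : η ∈ Metric.sphere (0 : E) 1 := by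
    simp [η, R, norm_smul, inv_mul_cancel₀ hR.ne']
  have hη0 : η ≠ 0 := ne_zero_of_mem_unit_sphere ⟨η, hη⟩
  have hRη : R • η = x := smul_inv_smul₀ hR.ne' x
  have hscale : R ^ i • iteratedFDeriv ℝ i f x = R ^ a • iteratedFDeriv ℝ i f η := by
    have hloc : (fun y => f (R • y)) =ᶠ[nhds η] R ^ a • f :=
      Filter.eventuallyEq_of_mem (hopen.mem_nhds hη0) fun y hy => hhom R hR y hy
    have hfi : ContDiffAt ℝ i f η :=
      (hf.contDiffAt (hopen.mem_nhds hη0)).of_le (Nat.cast_le.2 hi)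
    rw [← iteratedFDeriv_const_smul_apply hfi, ← (hloc.iteratedFDeriv ℝ i).eq_of_nhds, ← hRη,
      ← iteratedFDerivWithin_univ, ← iteratedFDerivWithin_univ]
    exact (iteratedFDerivWithin_comp_smul f uniqueDiffOn_univ hR.ne' (mem_univ _) i).symm
  have hbound : ‖iteratedFDeriv ℝ i f η‖ ≤ C := by
    rw [← iteratedFDerivWithin_of_isOpen i hopen hη0]
    exact hC i hi η hη
  have hnorm := congrArg norm hscale
  simp only [norm_smul, Real.norm_eq_abs, abs_of_pos (pow_pos hR i),
    abs_of_pos (Real.rpow_pos_of_pos hR a)] at hnorm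
  rw [Real.rpow_sub hR, Real.rpow_natCast, mul_div_assoc', le_div_iff₀ (pow_pos hR i),
    mul_comm _ (R ^ i), hnorm, mul_comm C]
  exact mul_le_mul_of_nonneg_left hbound (Real.rpow_pos_of_pos hR a).le

end Homogeneous

theorem ne_zero_of_lt_norm_rpow {E : Type*} [NormedAddCommGroup E] {a b : ℝ} (hb : 1 ≤ b) {x : E}
    (hx : b < ‖x‖ ^ a) : x ≠ 0 := by
  rintro rfl
  rw [norm_zero] at hx
  linarith [Real.zero_rpow_le_one a]

section NormRpow

variable {E : Type*} [NormedAddCommGroup E] [InnerProductSpace ℝ E]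

theorem contDiffOn_norm_rpow_s9 (a : ℝ) : ContDiffOn ℝ ∞ (fun x : E => ‖x‖ ^ a) {0}ᶜ :=
  fun _ hx => ((contDiffAt_norm ℝ hx).rpow_const_of_ne (norm_ne_zero_iff.2 hx)).contDiffWithinAt

theorem exists_norm_iteratedFDeriv_norm_rpow_le [FiniteDimensional ℝ E] (a : ℝ) (k : ℕ) :
    ∃ D > 0, ∀ i, 1 ≤ i → i ≤ k → ∀ x ≠ (0 : E),
      ‖iteratedFDeriv ℝ i (fun x : E => ‖x‖ ^ a) x‖ ≤ ‖x‖ ^ a * (D / ‖x‖) ^ i := by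
  obtain ⟨C, hC⟩ := exists_norm_iteratedFDeriv_le_of_homogeneous (a := a) (k := k)
    ((contDiffOn_norm_rpow_s9 (E := E) a).of_le (by exact_mod_cast le_top)) fun c hc x _ => by
      rw [norm_smul, Real.norm_of_nonneg hc.le, Real.mul_rpow hc.le (norm_nonneg x), smul_eq_mul]
  refine ⟨max C 1, by positivity, fun i hi hik x hx => ?_⟩
  have hR : 0 < ‖x‖ := norm_pos_iff.2 hx
  calc _ ≤ C * ‖x‖ ^ (a - i) := hC i hik x hx
    _ = ‖x‖ ^ a * (C / ‖x‖ ^ i) := by rw [Real.rpow_sub hR, Real.rpow_natCast]; ring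
    _ ≤ ‖x‖ ^ a * (max C 1 / ‖x‖) ^ i := by
        rw [div_pow]
        gcongr
        exact (le_max_left C 1).trans (le_self_pow₀ (le_max_right C 1) (by omega))

theorem isOpen_setOf_lt_norm_rpow {a b : ℝ} (hb : 1 ≤ b) : IsOpen {x : E | b < ‖x‖ ^ a} := by
  have h := ((contDiffOn_norm_rpow_s9 (E := E) a).continuousOn).isOpen_inter_preimage
    isOpen_compl_singleton (isOpen_Ioi (a := b))
  convert h using 1
  ext x
  exact ⟨fun hx => ⟨ne_zero_of_lt_norm_rpow hb hx, hx⟩, fun hx => hx.2⟩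

end NormRpow

theorem integral_one_sub_four_mul_rpow_neg_half {u : ℝ} (hu0 : u ≠ 0) (hu : u < 1 / 4) :
    ∫ s in (0 : ℝ)..1, (1 - 4 * s * u) ^ (-(1 / 2) : ℝ) = 2 / (1 + √(1 - 4 * u)) := by
  have hpos : ∀ s ∈ uIcc (0 : ℝ) 1, 0 < 1 - 4 * s * u := by
    intro s hs
    rw [uIcc_of_le zero_le_one] at hs
    rcases le_or_gt u 0 with h | h <;> nlinarith [hs.1, hs.2]
  have hderiv : ∀ s ∈ uIcc (0 : ℝ) 1,
      HasDerivAt (fun s => -(1 / (2 * u)) * √(1 - 4 * s * u))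
        ((1 - 4 * s * u) ^ (-(1 / 2) : ℝ)) s := by
    intro s hs
    have hlin : HasDerivAt (fun s : ℝ => 1 - 4 * s * u) (-(4 * u)) s := by
      simpa [mul_comm, mul_left_comm] using ((hasDerivAt_id s).mul_const (4 * u)).const_sub 1
    refine (((Real.hasDerivAt_sqrt (hpos s hs).ne').comp s hlin).const_mul _).congr_deriv ?_
    rw [Real.rpow_neg (hpos s hs).le, ← Real.sqrt_eq_rpow]
    field_simp
    ring
  have hint : IntervalIntegrable (fun s => (1 - 4 * s * u) ^ (-(1 / 2) : ℝ)) volume 0 1 :=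
    (ContinuousOn.rpow_const (by fun_prop) fun s hs => Or.inl (hpos s hs).ne').intervalIntegrable
  rw [intervalIntegral.integral_eq_sub_of_hasDerivAt hderiv hint]
  have hr : √(1 - 4 * u) ^ 2 = 1 - 4 * u := Real.sq_sqrt (by linarith)
  have hr0 : 0 ≤ √(1 - 4 * u) := Real.sqrt_nonneg _
  simp only [mul_zero, zero_mul, sub_zero, Real.sqrt_one, mul_one]
  generalize √(1 - 4 * u) = r at hr hr0 ⊢
  field_simp
  linear_combination (-1 : ℝ) * hr

def phiProfile (u : ℝ) : ℝ := -1 + 2 / (1 + √(1 - 4 * u))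

theorem contDiffOn_phiProfile : ContDiffOn ℝ ∞ phiProfile (Iio (1 / 4)) := by
  intro u hu
  have hpos : 0 < 1 - 4 * u := by rw [mem_Iio] at hu; linarith
  have hsqrt : ContDiffAt ℝ ∞ (fun u : ℝ => √(1 - 4 * u)) u :=
    (Real.contDiffAt_sqrt hpos.ne').comp u (by fun_prop)
  exact (contDiffAt_const.add (contDiffAt_const.div (contDiffAt_const.add hsqrt)
    (by positivity))).contDiffWithinAt

theorem abs_phiProfile_le {u : ℝ} (hu0 : 0 ≤ u) (hu : u ≤ 1 / 4) : |phiProfile u| ≤ 4 * u := by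
  have hr : √(1 - 4 * u) ^ 2 = 1 - 4 * u := Real.sq_sqrt (by linarith)
  have hr0 : 0 ≤ √(1 - 4 * u) := Real.sqrt_nonneg _
  have hr1 : √(1 - 4 * u) ≤ 1 := by nlinarith
  have hform : phiProfile u = (1 - √(1 - 4 * u)) / (1 + √(1 - 4 * u)) := by
    rw [phiProfile]; field_simp; ring
  rw [hform, abs_of_nonneg (by positivity), div_le_iff₀ (by positivity)]
  nlinarith

theorem exists_pow_mul_norm_iteratedFDerivWithin_phiProfile_le (k : ℕ) :
    ∃ M > 0, ∀ ε ∈ Ioc (0 : ℝ) (1 / 5), ∀ i ≤ k,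
      ε ^ i * ‖iteratedFDerivWithin ℝ i phiProfile (Iio (1 / 4)) ε‖ ≤ M * ε := by
  obtain ⟨B, hB⟩ := exists_bound_iteratedFDerivWithin_of_isCompact
    (contDiffOn_phiProfile.of_le (by exact_mod_cast le_top)) (uniqueDiffOn_Iio _)
    (isCompact_Icc (a := (0 : ℝ)) (b := 1 / 5)) fun u hu => hu.2.trans_lt (by norm_num)
  refine ⟨max 4 B, by positivity, fun ε ⟨hε0, hε⟩ i hi => ?_⟩
  rcases Nat.eq_zero_or_pos i with rfl | hi0
  · rw [pow_zero, one_mul, norm_iteratedFDerivWithin_zero, Real.norm_eq_abs]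
    exact (abs_phiProfile_le hε0.le (by linarith)).trans
      (mul_le_mul_of_nonneg_right (le_max_left _ _) hε0.le)
  · calc ε ^ i * ‖iteratedFDerivWithin ℝ i phiProfile (Iio (1 / 4)) ε‖
        ≤ ε * B := mul_le_mul (pow_le_of_le_one hε0.le (by linarith) hi0.ne')
          (hB i hi ε ⟨hε0.le, hε⟩) (norm_nonneg _) hε0.le
      _ ≤ max 4 B * ε := by rw [mul_comm]; gcongr; exact le_max_right _ _

theorem rpow_neg_lt_inv_of_lt {x a b : ℝ} (hx : 0 ≤ x) (hb : 0 < b) (h : b < x ^ a) :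
    x ^ (-a) < b⁻¹ := by
  rw [Real.rpow_neg hx]
  exact inv_strictAnti₀ hb h

theorem phi_eq_phiProfile {σ : ℝ} {ξ : EuclideanSpace ℝ (Fin n)} (hξ : 4 < ‖ξ‖ ^ (2 * σ)) :
    phi σ ξ = phiProfile (‖ξ‖ ^ (-(2 * σ))) := by
  have hu4 : ‖ξ‖ ^ (-(2 * σ)) < 1 / 4 := by
    simpa using rpow_neg_lt_inv_of_lt (norm_nonneg ξ) (by norm_num) hξ
  rw [phi, integral_one_sub_four_mul_rpow_neg_half _ hu4, phiProfile]
  rw [Real.rpow_neg (norm_nonneg _)]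
  exact inv_ne_zero (by positivity)

theorem stmt_9_general (σ : ℝ) (n : ℕ) (k : ℕ) :
    ∃ C : ℝ, 0 < C ∧
      ∀ ξ : EuclideanSpace ℝ (Fin n), 5 ≤ ‖ξ‖ ^ (2 * σ) →
        ‖iteratedFDerivWithin ℝ k (phi σ)
            {ξ : EuclideanSpace ℝ (Fin n) | 4 < ‖ξ‖ ^ (2 * σ)} ξ‖ ≤
          C * ‖ξ‖ ^ (-(2 * σ) - k) := by
  set U := {ξ : EuclideanSpace ℝ (Fin n) | 4 < ‖ξ‖ ^ (2 * σ)}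
  have hU : IsOpen U := isOpen_setOf_lt_norm_rpow (by norm_num)
  have hU0 : U ⊆ {0}ᶜ := fun ξ hξ => ne_zero_of_lt_norm_rpow (by norm_num) hξ
  obtain ⟨D, hD0, hD⟩ := exists_norm_iteratedFDeriv_norm_rpow_le (E := EuclideanSpace ℝ (Fin n))
    (-(2 * σ)) k
  obtain ⟨M, hM0, hM⟩ := exists_pow_mul_norm_iteratedFDerivWithin_phiProfile_le k
  refine ⟨k ! * M * D ^ k, by positivity, fun ξ hξ => ?_⟩
  have hξU : ξ ∈ U := show 4 < ‖ξ‖ ^ (2 * σ) by linarith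
  set R := ‖ξ‖
  have hR : 0 < R := norm_pos_iff.2 (hU0 hξU)
  set ε := R ^ (-(2 * σ)) with hεR
  have hε : ε ∈ Ioc (0 : ℝ) (1 / 5) := by
    refine ⟨by positivity, ?_⟩
    rw [hεR, Real.rpow_neg hR.le, one_div]; exact inv_anti₀ (by norm_num) hξ
  have hφ : EqOn (phi σ) (phiProfile ∘ fun η => ‖η‖ ^ (-(2 * σ))) U :=
    fun η hη => phi_eq_phiProfile hη
  rw [iteratedFDerivWithin_congr hφ hξU]
  calc _ ≤ k ! * (M * ε) * (D / R) ^ k := by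
        refine norm_iteratedFDerivWithin_comp_le_of_smul (f := fun η => ‖η‖ ^ (-(2 * σ)))
          contDiffOn_phiProfile ((contDiffOn_norm_rpow_s9 _).mono hU0) (by exact_mod_cast le_top)
          (uniqueDiffOn_Iio _) hU.uniqueDiffOn (fun η hη => ?_) hξU hε.1.ne' (fun i hi => ?_)
          (fun i hi hik => ?_)
        · simpa using rpow_neg_lt_inv_of_lt (norm_nonneg η) (by norm_num) hη
        · rw [Real.norm_of_nonneg hε.1.le]; exact hM ε hε i hi
        · rw [iteratedFDerivWithin_of_isOpen i hU hξU, Real.norm_of_nonneg hε.1.le]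
          exact hD i hi hik ξ (hU0 hξU)
    _ = k ! * M * D ^ k * R ^ (-(2 * σ) - k) := by
        rw [Real.rpow_sub hR, Real.rpow_natCast, div_pow]; ring

/-- derivative bounds `|∂^α φ(ξ)| ≲ |ξ|^{−2σ−|α|}` for large frequencies. -/
theorem stmt_9 (σ : ℝ) (hσ : 1 < σ) (n : ℕ) (hn : 1 ≤ n) (k : ℕ) :
    ∃ C : ℝ, 0 < C ∧
      ∀ ξ : EuclideanSpace ℝ (Fin n), 5 ≤ ‖ξ‖ ^ (2 * σ) →
        ‖iteratedFDerivWithin ℝ k (phi σ)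
            {ξ : EuclideanSpace ℝ (Fin n) | 4 < ‖ξ‖ ^ (2 * σ)} ξ‖ ≤
          C * ‖ξ‖ ^ (-(2 * σ) - k) :=
  stmt_9_general σ n k
end
end
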